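/- Let P ⊆ ℝ^d be a polytope, F a nonempty exposed face of P with F ≠ P, and a ∈ ℝ^d, b ∈ ℝ such that every extreme point v of P satisfies ⟨a,v⟩ < b if v ∈ F and ⟨a,v⟩ > b if v ∉ F; put Q = P ∩ {x : ⟨a,x⟩ ≥ b}. Assume moreover that the truncation is parallel, i.e., ⟨a,·⟩ is constant on F. Then for every extreme point u of P contained in F, N(P,u) = ⋃_w N(Q, u + t_w (w − u)), where the union is over all extreme points w of P with w ∉ F such that the segment [u,w] is an exposed face of P (i.e., w is adjacent to u), and t_w = (b − ⟨a,u⟩)/(⟨a,w⟩ − ⟨a,u⟩), so that u + t_w(w − u) is the intersection point of the edge [u,w] with the truncating hyperplane {x : ⟨a,x⟩ = b}. -/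

import Mathlib

/-- The standard inner product on `ℝ^d`. -/
def dotp {d : ℕ} (u v : Fin d → ℝ) : ℝ := ∑ t, u t * v t

/-- The normal cone of `X ⊆ ℝ^d` at a point `v`. -/
def normalCone {d : ℕ} (X : Set (Fin d → ℝ)) (v : Fin d → ℝ) : Set (Fin d → ℝ) :=
  {u | ∀ y ∈ X, dotp u y ≤ dotp u v}

/-!
If `z` is normal to `P` at the vertex `u`, tilt it to `ζ = z - τ a` with `τ ≤ 0` as large as
possible while `u` still maximizes `ζ` on `P`. The face of `P` exposed by `ζ` then contains a vertex
outside `G`, hence one where `⟨a,·⟩` exceeds its value at `u`, and inside this face there is an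
edge `[u,w]` of `P` along which `⟨a,·⟩` increases (found through the vertex figure of `u`). On `Q`,
`⟨z,y⟩ ≤ ⟨z,u⟩ + τ (⟨a,y⟩ - ⟨a,u⟩) ≤ ⟨z,u⟩ + τ (b - ⟨a,u⟩)`, which is the value of `z` where `[u,w]`
meets the hyperplane `⟨a,x⟩ = b`.

Conversely, if `z` is normal to `Q` at that point `p`, compare `p` with `w` and with the vertices
outside `G`, all in `Q`, and with the points where the edges `[v,w]`, `v ∈ G`, cross the hyperplane:
as `⟨a,·⟩` is constant on `G`, they do so at the same parameter as `[u,w]`.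
-/

open Matrix Filter Topology Set

lemma exists_pos_lex_perturbation {ι : Type*} {T : Set ι} (hT : T.Finite) {f g : ι → ℝ} {e : ι}
    (hf : ∀ x ∈ T, f x ≤ f e) (hg : ∀ x ∈ T, f x = f e → g x ≤ g e) :
    ∃ ε > 0, ∀ x ∈ T, f x + ε * g x ≤ f e + ε * g e ∧
      (f x + ε * g x = f e + ε * g e → f x = f e ∧ g x = g e) := by
  have hsmall : ∀ᶠ ε in 𝓝[>] (0 : ℝ), ∀ x ∈ {x ∈ T | f x < f e},
      ε * (g x - g e) < f e - f x := by
    refine nhdsWithin_le_nhds <| (hT.subset fun x hx => hx.1).eventually_all.2 fun x hx => ?_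
    have hcont : Tendsto (fun ε : ℝ => ε * (g x - g e)) (𝓝 0) (𝓝 0) := by
      simpa using (tendsto_id (x := 𝓝 (0 : ℝ))).mul_const (g x - g e)
    exact hcont.eventually (gt_mem_nhds (sub_pos.2 hx.2))
  obtain ⟨ε, hε, hεpos⟩ := (hsmall.and self_mem_nhdsWithin).exists
  refine ⟨ε, hεpos, fun x hx => ?_⟩
  rcases (hf x hx).lt_or_eq with hlt | heq
  · have := hε x ⟨hx, hlt⟩
    exact ⟨by linarith, fun h => by linarith⟩
  · have hle := mul_le_mul_of_nonneg_left (hg x hx heq) hεpos.le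
    refine ⟨by linarith, fun h => ⟨heq, ?_⟩⟩
    exact mul_left_cancel₀ hεpos.ne' (by linarith)

lemma exists_mem_notMem_of_ne_convexHull {E : Type*} [AddCommGroup E] [Module ℝ E]
    {X G : Set E} (hG : Convex ℝ G) (hGX : G ⊆ convexHull ℝ X) (hne : G ≠ convexHull ℝ X) :
    ∃ v ∈ X, v ∉ G := by
  by_contra! h
  exact hne (hGX.antisymm (convexHull_min h hG))

section

variable {d : ℕ}

lemma dotp_eq_dotProduct (u v : Fin d → ℝ) : dotp u v = u ⬝ᵥ v := rfl

lemma convex_dotProduct_le (c : Fin d → ℝ) (r : ℝ) : Convex ℝ {x | c ⬝ᵥ x ≤ r} :=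
  convex_halfSpace_le (dotProductEquiv ℝ (Fin d) c).isLinear r

lemma convex_dotProduct_lt (c : Fin d → ℝ) (r : ℝ) : Convex ℝ {x | c ⬝ᵥ x < r} :=
  convex_halfSpace_lt (dotProductEquiv ℝ (Fin d) c).isLinear r

lemma convex_dotProduct_ge (c : Fin d → ℝ) (r : ℝ) : Convex ℝ {x | r ≤ c ⬝ᵥ x} :=
  convex_halfSpace_ge (dotProductEquiv ℝ (Fin d) c).isLinear r

lemma dotProduct_le_of_mem_convexHull {X : Set (Fin d → ℝ)} {c y : Fin d → ℝ} {r : ℝ}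
    (hX : ∀ v ∈ X, c ⬝ᵥ v ≤ r) (hy : y ∈ convexHull ℝ X) : c ⬝ᵥ y ≤ r :=
  convexHull_min hX (convex_dotProduct_le c r) hy

lemma mem_convexHull_dotProduct_eq {X : Set (Fin d → ℝ)} {c y : Fin d → ℝ} {r : ℝ}
    (hX : ∀ v ∈ X, c ⬝ᵥ v ≤ r) (hy : y ∈ convexHull ℝ X) (hr : r ≤ c ⬝ᵥ y) :
    y ∈ convexHull ℝ {v ∈ X | c ⬝ᵥ v = r} := by
  set Y := {v ∈ X | c ⬝ᵥ v = r}
  set Z := {v ∈ X | c ⬝ᵥ v < r}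
  have hXYZ : X = Y ∪ Z := by
    ext v
    simp only [Y, Z, mem_union, mem_ofPred_eq, ← and_or_left]
    exact ⟨fun hv => ⟨hv, (hX v hv).eq_or_lt⟩, fun hv => hv.1⟩
  have hZ : ∀ x ∈ convexHull ℝ Z, c ⬝ᵥ x < r :=
    fun x hx => convexHull_min (fun v hv => hv.2) (convex_dotProduct_lt c r) hx
  rcases Z.eq_empty_or_nonempty with hZe | hZne
  · rwa [hXYZ, hZe, union_empty] at hy
  rcases Y.eq_empty_or_nonempty with hYe | hYne
  · rw [hXYZ, hYe, empty_union] at hy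
    exact absurd hr (hZ y hy).not_ge
  rw [hXYZ, convexHull_union hYne hZne, mem_convexJoin] at hy
  obtain ⟨y₁, hy₁, y₂, hy₂, α, β, hα, hβ, hαβ, rfl⟩ := hy
  have h₁ : c ⬝ᵥ y₁ ≤ r := dotProduct_le_of_mem_convexHull (fun v hv => hv.2.le) hy₁
  have h₂ := hZ y₂ hy₂
  have hβ0 : β = 0 := by
    by_contra hβ0
    have := mul_lt_mul_of_pos_left h₂ (lt_of_le_of_ne hβ (Ne.symm hβ0))
    have := mul_le_mul_of_nonneg_left h₁ hα
    have : α * r + β * r = r := by rw [← add_mul, hαβ, one_mul]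
    rw [dotProduct_add, dotProduct_smul, dotProduct_smul, smul_eq_mul, smul_eq_mul] at hr
    linarith
  obtain rfl : α = 1 := by linarith
  simpa [hβ0] using hy₁

lemma exists_dotProduct_eq (f : StrongDual ℝ (Fin d → ℝ)) : ∃ ℓ, ∀ x, ℓ ⬝ᵥ x = f x :=
  ⟨(dotProductEquiv ℝ (Fin d)).symm f.toLinearMap, fun x => by
    rw [← dotProductEquiv_apply_apply, LinearEquiv.apply_symm_apply]; rfl⟩

lemma exists_dotProduct_lt_of_mem_extremePoints {X : Set (Fin d → ℝ)} (hX : X.Finite)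
    {u : Fin d → ℝ} (hu : u ∈ (convexHull ℝ X).extremePoints ℝ) :
    ∃ ℓ, ∀ v ∈ X, v ≠ u → ℓ ⬝ᵥ v < ℓ ⬝ᵥ u := by
  have hnot : u ∉ convexHull ℝ (X \ {u}) := fun h =>
    ((convex_convexHull ℝ X).mem_extremePoints_iff_mem_sdiff_convexHull_sdiff.1 hu).2 <|
      convexHull_mono (sdiff_subset_sdiff_left (subset_convexHull ℝ X)) h
  obtain ⟨f, r, hf, hr⟩ := geometric_hahn_banach_closed_point (convex_convexHull ℝ _)
    (hX.sdiff.isClosed_convexHull ℝ) hnot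
  obtain ⟨ℓ, hℓ⟩ := exists_dotProduct_eq f
  refine ⟨ℓ, fun v hv hvu => ?_⟩
  rw [hℓ, hℓ]
  exact (hf v (subset_convexHull ℝ _ ⟨hv, hvu⟩)).trans hr

lemma dotProduct_le_dotProduct_self_of_dotProduct_self_le {x e : Fin d → ℝ}
    (h : x ⬝ᵥ x ≤ e ⬝ᵥ e) : e ⬝ᵥ x ≤ e ⬝ᵥ e ∧ (e ⬝ᵥ x = e ⬝ᵥ e → x = e) := by
  have hexp : (x - e) ⬝ᵥ (x - e) = x ⬝ᵥ x - 2 * e ⬝ᵥ x + e ⬝ᵥ e := by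
    simp only [sub_dotProduct, dotProduct_sub, dotProduct_comm x e]; ring
  have hnn : 0 ≤ (x - e) ⬝ᵥ (x - e) := by simpa using dotProduct_star_self_nonneg (x - e)
  refine ⟨by linarith, fun heq => sub_eq_zero.1 (dotProduct_self_eq_zero.1 ?_)⟩
  linarith

lemma exists_exposed_maximizer {A : Set (Fin d → ℝ)} (hA : A.Finite) (hne : A.Nonempty)
    (c : Fin d → ℝ) :
    ∃ e ∈ A, (∀ x ∈ A, c ⬝ᵥ x ≤ c ⬝ᵥ e) ∧ ∃ g, ∀ x ∈ A, x ≠ e → g ⬝ᵥ x < g ⬝ᵥ e := by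
  obtain ⟨e₀, he₀, he₀max⟩ := exists_max_image A (c ⬝ᵥ ·) hA hne
  set T := {x ∈ A | c ⬝ᵥ x = c ⬝ᵥ e₀}
  obtain ⟨e, ⟨heA, hce⟩, hefar⟩ :=
    exists_max_image T (fun x => x ⬝ᵥ x) (hA.subset fun x hx => hx.1) ⟨e₀, he₀, rfl⟩
  have hemax : ∀ x ∈ A, c ⬝ᵥ x ≤ c ⬝ᵥ e := hce ▸ he₀max
  -- among the maximizers of `c`, the one of largest norm is exposed by `e` itself
  have htie : ∀ x ∈ A, c ⬝ᵥ x = c ⬝ᵥ e → e ⬝ᵥ x ≤ e ⬝ᵥ e ∧ (e ⬝ᵥ x = e ⬝ᵥ e → x = e) :=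
    fun x hx hcx => dotProduct_le_dotProduct_self_of_dotProduct_self_le
      (hefar x ⟨hx, hcx.trans hce⟩)
  obtain ⟨ε, -, hε⟩ := exists_pos_lex_perturbation hA hemax fun x hx hcx => (htie x hx hcx).1
  refine ⟨e, heA, hemax, c + ε • e, fun x hx hxe => ?_⟩
  simp only [add_dotProduct, smul_dotProduct, smul_eq_mul]
  refine (hε x hx).1.lt_of_ne fun heq => hxe ?_
  obtain ⟨hcx, hex⟩ := (hε x hx).2 heq
  exact (htie x hx hcx).2 hex

lemma exists_exposed_ray {Y : Set (Fin d → ℝ)} (hY : Y.Finite) {u ℓ₀ c : Fin d → ℝ}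
    (hℓ₀ : ∀ v ∈ Y, ℓ₀ ⬝ᵥ v < ℓ₀ ⬝ᵥ u) (hc : ∃ v ∈ Y, c ⬝ᵥ u < c ⬝ᵥ v) :
    ∃ ℓ e, 0 < c ⬝ᵥ e ∧ (∃ v ∈ Y, ℓ ⬝ᵥ v = ℓ ⬝ᵥ u) ∧
      ∀ v ∈ Y, ℓ ⬝ᵥ v ≤ ℓ ⬝ᵥ u ∧ (ℓ ⬝ᵥ v = ℓ ⬝ᵥ u → v - u = (ℓ₀ ⬝ᵥ u - ℓ₀ ⬝ᵥ v) • e) := by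
  set β := fun v => ℓ₀ ⬝ᵥ u - ℓ₀ ⬝ᵥ v
  have hβ : ∀ v ∈ Y, 0 < β v := fun v hv => sub_pos.2 (hℓ₀ v hv)
  -- `u + nf v` is where the ray from `u` through `v` meets the hyperplane `ℓ₀ ⬝ᵥ (x - u) = -1`:
  -- the points `nf v` form the vertex figure of `u`, whose vertices are the directions of edges.
  set nf := fun v => (β v)⁻¹ • (v - u)
  have hnf : ∀ v ∈ Y, v - u = β v • nf v := fun v hv => (smul_inv_smul₀ (hβ v hv).ne' _).symm
  have hdot : ∀ m, ∀ v ∈ Y, m ⬝ᵥ v - m ⬝ᵥ u = β v * m ⬝ᵥ nf v := fun m v hv => by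
    rw [← dotProduct_sub, hnf v hv, dotProduct_smul, smul_eq_mul]
  obtain ⟨v₀, hv₀, hcv₀⟩ := hc
  obtain ⟨_, ⟨v₁, hv₁, rfl⟩, hcmax, g, hg⟩ :=
    exists_exposed_maximizer (hY.image nf) ⟨_, mem_image_of_mem nf hv₀⟩ c
  set ℓ := g + (g ⬝ᵥ nf v₁) • ℓ₀
  have hℓ : ∀ v ∈ Y, ℓ ⬝ᵥ v - ℓ ⬝ᵥ u = β v * (g ⬝ᵥ nf v - g ⬝ᵥ nf v₁) := fun v hv => by
    have := hdot g v hv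
    simp only [ℓ, β, add_dotProduct, smul_dotProduct, smul_eq_mul] at this ⊢
    linear_combination this
  have hℓlt : ∀ v ∈ Y, nf v ≠ nf v₁ → ℓ ⬝ᵥ v < ℓ ⬝ᵥ u := fun v hv hne => by
    have := mul_neg_of_pos_of_neg (hβ v hv) (sub_neg.2 (hg _ (mem_image_of_mem nf hv) hne))
    linarith [hℓ v hv]
  refine ⟨ℓ, nf v₁, ?_, ⟨v₁, hv₁, by linarith [hℓ v₁ hv₁]⟩, fun v hv => ⟨?_, fun heq => ?_⟩⟩
  · have h₀ : 0 < c ⬝ᵥ nf v₀ := pos_of_mul_pos_right (by linarith [hdot c v₀ hv₀]) (hβ v₀ hv₀).le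
    exact h₀.trans_le (hcmax _ (mem_image_of_mem nf hv₀))
  · by_cases hne : nf v = nf v₁
    · rw [← sub_nonpos, hℓ v hv, hne, sub_self, mul_zero]
    · exact (hℓlt v hv hne).le
  · have : nf v = nf v₁ := by_contra fun hne => (hℓlt v hv hne).ne heq
    rw [← this]
    exact hnf v hv

lemma exists_edge_of_forall_dotProduct_lt {X : Set (Fin d → ℝ)} (hX : X.Finite)
    {u ℓ₀ c : Fin d → ℝ} (hℓ₀ : ∀ v ∈ X, v ≠ u → ℓ₀ ⬝ᵥ v < ℓ₀ ⬝ᵥ u)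
    (hc : ∃ v ∈ X, c ⬝ᵥ u < c ⬝ᵥ v) :
    ∃ ℓ, ∃ w ∈ X, c ⬝ᵥ u < c ⬝ᵥ w ∧ ℓ ⬝ᵥ w = ℓ ⬝ᵥ u ∧
      ∀ v ∈ X, ℓ ⬝ᵥ v ≤ ℓ ⬝ᵥ u ∧ (ℓ ⬝ᵥ v = ℓ ⬝ᵥ u → v ∈ segment ℝ u w) := by
  have hY : ∀ v ∈ X \ {u}, ℓ₀ ⬝ᵥ v < ℓ₀ ⬝ᵥ u := fun v hv => hℓ₀ v hv.1 hv.2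
  obtain ⟨v₀, hv₀, hcv₀⟩ := hc
  have hv₀u : v₀ ≠ u := by rintro rfl; exact lt_irrefl _ hcv₀
  obtain ⟨ℓ, e, hce, hne, hℓ⟩ := exists_exposed_ray hX.sdiff hY ⟨v₀, ⟨hv₀, hv₀u⟩, hcv₀⟩
  -- the point of `X` farthest out on the exposed ray is the other end of the edge
  obtain ⟨w, ⟨hwY, hℓw⟩, hwfar⟩ := exists_max_image {v ∈ X \ {u} | ℓ ⬝ᵥ v = ℓ ⬝ᵥ u}
    (fun v => ℓ₀ ⬝ᵥ u - ℓ₀ ⬝ᵥ v) (hX.sdiff.subset fun _ h => h.1) hne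
  have hw := (hℓ w hwY).2 hℓw
  have hβw : 0 < ℓ₀ ⬝ᵥ u - ℓ₀ ⬝ᵥ w := sub_pos.2 (hY w hwY)
  refine ⟨ℓ, w, hwY.1, ?_, hℓw, fun v hv => ?_⟩
  · have : c ⬝ᵥ w - c ⬝ᵥ u = (ℓ₀ ⬝ᵥ u - ℓ₀ ⬝ᵥ w) * c ⬝ᵥ e := by
      rw [← dotProduct_sub, hw, dotProduct_smul, smul_eq_mul]
    nlinarith [mul_pos hβw hce]
  by_cases hvu : v = u
  · subst hvu
    exact ⟨le_rfl, fun _ => left_mem_segment ℝ _ _⟩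
  have hvY : v ∈ X \ {u} := ⟨hv, hvu⟩
  refine ⟨(hℓ v hvY).1, fun hℓv => ?_⟩
  have hβv : 0 < ℓ₀ ⬝ᵥ u - ℓ₀ ⬝ᵥ v := sub_pos.2 (hY v hvY)
  rw [segment_eq_image']
  refine ⟨(ℓ₀ ⬝ᵥ u - ℓ₀ ⬝ᵥ v) / (ℓ₀ ⬝ᵥ u - ℓ₀ ⬝ᵥ w),
    ⟨div_nonneg hβv.le hβw.le, div_le_one_of_le₀ (hwfar v ⟨hvY, hℓv⟩) hβw.le⟩, ?_⟩
  dsimp only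
  rw [hw, smul_smul, div_mul_cancel₀ _ hβw.ne', ← (hℓ v hvY).2 hℓv, add_sub_cancel]

lemma isExposed_segment_of_forall_dotProduct_le {X : Set (Fin d → ℝ)} {u w m : Fin d → ℝ}
    (hu : u ∈ X) (hw : w ∈ X) (hm : ∀ v ∈ X, m ⬝ᵥ v ≤ m ⬝ᵥ u) (hmw : m ⬝ᵥ w = m ⬝ᵥ u)
    (hface : ∀ v ∈ X, m ⬝ᵥ v = m ⬝ᵥ u → v ∈ segment ℝ u w) :
    IsExposed ℝ (convexHull ℝ X) (segment ℝ u w) := by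
  refine fun _ => ⟨LinearMap.toContinuousLinearMap (dotProductEquiv ℝ (Fin d) m), ?_⟩
  ext x
  simp only [LinearMap.coe_toContinuousLinearMap', dotProductEquiv_apply_apply, mem_ofPred_eq]
  constructor
  · intro hx
    have hxu : m ⬝ᵥ u ≤ m ⬝ᵥ x :=
      (convex_dotProduct_ge m _).segment_subset (le_refl (m ⬝ᵥ u)) hmw.ge hx
    exact ⟨segment_subset_convexHull hu hw hx,
      fun y hy => (dotProduct_le_of_mem_convexHull hm hy).trans hxu⟩
  · rintro ⟨hx, hxmax⟩
    exact convexHull_min (fun v hv => hface v hv.1 hv.2) (convex_segment u w)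
      (mem_convexHull_dotProduct_eq hm hx (hxmax u (subset_convexHull ℝ X hu)))

lemma exists_isExposed_segment {X : Set (Fin d → ℝ)} (hX : X.Finite) {u ζ c : Fin d → ℝ}
    (hu : u ∈ (convexHull ℝ X).extremePoints ℝ) (hζ : ∀ v ∈ X, ζ ⬝ᵥ v ≤ ζ ⬝ᵥ u)
    (hc : ∃ v ∈ X, ζ ⬝ᵥ v = ζ ⬝ᵥ u ∧ c ⬝ᵥ u < c ⬝ᵥ v) :
    ∃ w ∈ X, ζ ⬝ᵥ w = ζ ⬝ᵥ u ∧ c ⬝ᵥ u < c ⬝ᵥ w ∧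
      IsExposed ℝ (convexHull ℝ X) (segment ℝ u w) := by
  obtain ⟨ℓ₀, hℓ₀⟩ := exists_dotProduct_lt_of_mem_extremePoints hX hu
  obtain ⟨v₀, hv₀, hζv₀, hcv₀⟩ := hc
  obtain ⟨ℓ, w, ⟨hwX, hζw⟩, hcw, hℓw, hℓ⟩ :=
    exists_edge_of_forall_dotProduct_lt (X := {v ∈ X | ζ ⬝ᵥ v = ζ ⬝ᵥ u})
      (hX.subset fun _ h => h.1) (fun v hv => hℓ₀ v hv.1) ⟨v₀, ⟨hv₀, hζv₀⟩, hcv₀⟩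
  -- perturbing `ζ` by `ℓ` cuts the face of `ζ` down to the edge
  obtain ⟨ε, -, hε⟩ := exists_pos_lex_perturbation (f := (ζ ⬝ᵥ ·)) (g := (ℓ ⬝ᵥ ·)) hX hζ
    fun v hv hζv => (hℓ v ⟨hv, hζv⟩).1
  refine ⟨w, hwX, hζw, hcw, isExposed_segment_of_forall_dotProduct_le (m := ζ + ε • ℓ)
    (extremePoints_convexHull_subset hu) hwX ?_ ?_ ?_⟩ <;>
    simp only [add_dotProduct, smul_dotProduct, smul_eq_mul]
  · exact fun v hv => (hε v hv).1
  · rw [hζw, hℓw]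
  · intro v hv h
    obtain ⟨hζv, hℓv⟩ := (hε v hv).2 h
    exact (hℓ v ⟨hv, hζv⟩).2 hℓv

lemma convexHull_extremePoints_convexHull {V : Set (Fin d → ℝ)} (hV : V.Finite) :
    convexHull ℝ ((convexHull ℝ V).extremePoints ℝ) = convexHull ℝ V := by
  rw [← ((hV.subset extremePoints_convexHull_subset).isClosed_convexHull ℝ).closure_eq]
  exact closure_convexHull_extremePoints (hV.isCompact_convexHull ℝ) (convex_convexHull ℝ V)

lemma exists_nonpos_tilt {X : Set (Fin d → ℝ)} (hX : X.Finite) {u a z : Fin d → ℝ}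
    (hmin : ∀ v ∈ X, a ⬝ᵥ u ≤ a ⬝ᵥ v) (hne : ∃ v ∈ X, a ⬝ᵥ u < a ⬝ᵥ v)
    (hz : ∀ v ∈ X, z ⬝ᵥ v ≤ z ⬝ᵥ u) :
    ∃ τ : ℝ, τ ≤ 0 ∧ (∀ v ∈ X, (z - τ • a) ⬝ᵥ v ≤ (z - τ • a) ⬝ᵥ u) ∧
      ∃ w ∈ X, a ⬝ᵥ u < a ⬝ᵥ w ∧ (z - τ • a) ⬝ᵥ w = (z - τ • a) ⬝ᵥ u := by
  obtain ⟨w, ⟨hwX, haw⟩, hwmax⟩ := exists_max_image {v ∈ X | a ⬝ᵥ u < a ⬝ᵥ v}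
    (fun v => (z ⬝ᵥ v - z ⬝ᵥ u) / (a ⬝ᵥ v - a ⬝ᵥ u)) (hX.subset fun _ h => h.1) hne
  set τ := (z ⬝ᵥ w - z ⬝ᵥ u) / (a ⬝ᵥ w - a ⬝ᵥ u)
  have hτw : τ * (a ⬝ᵥ w - a ⬝ᵥ u) = z ⬝ᵥ w - z ⬝ᵥ u := div_mul_cancel₀ _ (sub_pos.2 haw).ne'
  have hτv : ∀ v ∈ X, z ⬝ᵥ v - z ⬝ᵥ u ≤ τ * (a ⬝ᵥ v - a ⬝ᵥ u) := fun v hv => by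
    rcases (hmin v hv).lt_or_eq with hlt | heq
    · exact (div_le_iff₀ (sub_pos.2 hlt)).1 (hwmax v ⟨hv, hlt⟩)
    · rw [← heq, sub_self, mul_zero, sub_nonpos]
      exact hz v hv
  refine ⟨τ, div_nonpos_of_nonpos_of_nonneg (sub_nonpos.2 (hz w hwX)) (sub_pos.2 haw).le,
    fun v hv => ?_, w, hwX, haw, ?_⟩ <;>
    simp only [sub_dotProduct, smul_dotProduct, smul_eq_mul]
  · linarith [hτv v hv]
  · linarith

lemma mem_normalCone_inter_of_tilt {P : Set (Fin d → ℝ)} {u w a z : Fin d → ℝ} {b τ : ℝ}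
    (hτ : τ ≤ 0) (hP : ∀ y ∈ P, (z - τ • a) ⬝ᵥ y ≤ (z - τ • a) ⬝ᵥ u)
    (hw : (z - τ • a) ⬝ᵥ w = (z - τ • a) ⬝ᵥ u) (haw : a ⬝ᵥ w ≠ a ⬝ᵥ u) :
    z ∈ normalCone (P ∩ {x | b ≤ a ⬝ᵥ x})
      (u + ((b - a ⬝ᵥ u) / (a ⬝ᵥ w - a ⬝ᵥ u)) • (w - u)) := by
  rintro y ⟨hy, hby⟩
  have hyu := hP y hy
  simp only [sub_dotProduct, smul_dotProduct, smul_eq_mul] at hyu hw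
  have hp : (b - a ⬝ᵥ u) / (a ⬝ᵥ w - a ⬝ᵥ u) * (z ⬝ᵥ w - z ⬝ᵥ u) = τ * (b - a ⬝ᵥ u) := by
    rw [show z ⬝ᵥ w - z ⬝ᵥ u = τ * (a ⬝ᵥ w - a ⬝ᵥ u) by linarith]
    field_simp [sub_ne_zero.2 haw]
  have hτy := mul_le_mul_of_nonpos_left (sub_le_sub_right hby (a ⬝ᵥ u)) hτ
  change z ⬝ᵥ y ≤ z ⬝ᵥ _
  simp only [dotProduct_add, dotProduct_smul, dotProduct_sub, smul_eq_mul, hp]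
  linarith

lemma exists_edge_mem_normalCone_truncation {X : Set (Fin d → ℝ)} (hX : X.Finite)
    {u a z : Fin d → ℝ} (b : ℝ) (hu : u ∈ (convexHull ℝ X).extremePoints ℝ)
    (hmin : ∀ v ∈ X, a ⬝ᵥ u ≤ a ⬝ᵥ v) (hne : ∃ v ∈ X, a ⬝ᵥ u < a ⬝ᵥ v)
    (hz : z ∈ normalCone (convexHull ℝ X) u) :
    ∃ w ∈ X, a ⬝ᵥ u < a ⬝ᵥ w ∧ IsExposed ℝ (convexHull ℝ X) (segment ℝ u w) ∧
      z ∈ normalCone (convexHull ℝ X ∩ {x | b ≤ a ⬝ᵥ x})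
        (u + ((b - a ⬝ᵥ u) / (a ⬝ᵥ w - a ⬝ᵥ u)) • (w - u)) := by
  obtain ⟨τ, hτ, hζ, w₁, hw₁X, haw₁, hζw₁⟩ :=
    exists_nonpos_tilt hX hmin hne fun v hv => hz v (subset_convexHull ℝ X hv)
  obtain ⟨w, hwX, hζw, haw, hexp⟩ := exists_isExposed_segment hX hu hζ ⟨w₁, hw₁X, hζw₁, haw₁⟩
  exact ⟨w, hwX, haw, hexp, mem_normalCone_inter_of_tilt hτ
    (fun y hy => dotProduct_le_of_mem_convexHull hζ hy) hζw haw.ne'⟩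

lemma mem_normalCone_of_mem_normalCone_truncation {X : Set (Fin d → ℝ)} {u w a z : Fin d → ℝ}
    {b : ℝ} (hw : w ∈ X) (hub : a ⬝ᵥ u < b) (hbw : b < a ⬝ᵥ w)
    (hlevel : ∀ v ∈ X, a ⬝ᵥ v = a ⬝ᵥ u ∨ b ≤ a ⬝ᵥ v)
    (hz : z ∈ normalCone (convexHull ℝ X ∩ {x | b ≤ a ⬝ᵥ x})
      (u + ((b - a ⬝ᵥ u) / (a ⬝ᵥ w - a ⬝ᵥ u)) • (w - u))) :
    z ∈ normalCone (convexHull ℝ X) u := by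
  set t := (b - a ⬝ᵥ u) / (a ⬝ᵥ w - a ⬝ᵥ u)
  have hden : 0 < a ⬝ᵥ w - a ⬝ᵥ u := by linarith
  have ht0 : 0 < t := div_pos (by linarith) hden
  have ht1 : t < 1 := (div_lt_one hden).2 (by linarith)
  have hval : ∀ m v, m ⬝ᵥ (v + t • (w - v)) = (1 - t) * m ⬝ᵥ v + t * m ⬝ᵥ w := fun m v => by
    simp only [dotProduct_add, dotProduct_smul, dotProduct_sub, smul_eq_mul]; ring
  -- for `v` on the level of `u`, the edge `[v, w]` crosses the hyperplane at parameter `t` too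
  have hcut : ∀ v ∈ X, a ⬝ᵥ v = a ⬝ᵥ u → z ⬝ᵥ v ≤ z ⬝ᵥ u := fun v hv hav => by
    have hmem : v + t • (w - v) ∈ convexHull ℝ X := (convex_convexHull ℝ X).add_smul_sub_mem
      (subset_convexHull ℝ X hv) (subset_convexHull ℝ X hw) ⟨ht0.le, ht1.le⟩
    have hlev : b ≤ a ⬝ᵥ (v + t • (w - v)) := by
      rw [hval, hav]
      have : t * (a ⬝ᵥ w - a ⬝ᵥ u) = b - a ⬝ᵥ u := div_mul_cancel₀ _ hden.ne'
      linarith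
    have hle : z ⬝ᵥ (v + t • (w - v)) ≤ z ⬝ᵥ (u + t • (w - u)) := hz _ ⟨hmem, hlev⟩
    rw [hval, hval] at hle
    exact le_of_mul_le_mul_left (by linarith) (sub_pos.2 ht1)
  have hp : z ⬝ᵥ (u + t • (w - u)) ≤ z ⬝ᵥ u := by
    have hwp : z ⬝ᵥ w ≤ z ⬝ᵥ (u + t • (w - u)) := hz w ⟨subset_convexHull ℝ X hw, hbw.le⟩
    rw [hval] at hwp ⊢
    nlinarith
  refine fun y hy => dotProduct_le_of_mem_convexHull (fun v hv => ?_) hy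
  rcases hlevel v hv with hav | hbv
  · exact hcut v hv hav
  · exact (hz v ⟨subset_convexHull ℝ X hv, hbv⟩).trans hp

end

theorem stmt_11_general (d : ℕ) (V : Set (Fin d → ℝ)) (hV : V.Finite)
    (P : Set (Fin d → ℝ)) (hP : P = convexHull ℝ V)
    (G : Set (Fin d → ℝ)) (hG : IsExposed ℝ P G) (hGP : G ≠ P)
    (a : Fin d → ℝ) (b : ℝ)
    (hsep : ∀ v ∈ P.extremePoints ℝ,
      (v ∈ G → dotp a v < b) ∧ (v ∉ G → b < dotp a v))
    (hpar : ∀ x ∈ G, ∀ y ∈ G, dotp a x = dotp a y)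
    (Q : Set (Fin d → ℝ)) (hQ : Q = P ∩ {x | b ≤ dotp a x}) :
    ∀ u ∈ P.extremePoints ℝ, u ∈ G →
      normalCone P u =
        {z | ∃ w, w ∈ P.extremePoints ℝ ∧ w ∉ G ∧ IsExposed ℝ P (segment ℝ u w) ∧
          z ∈ normalCone Q
            (u + ((b - dotp a u) / (dotp a w - dotp a u)) • (w - u))} := by
  intro u huX huG
  simp only [dotp_eq_dotProduct] at hsep hpar hQ ⊢
  have hPX : P = convexHull ℝ (P.extremePoints ℝ) := by
    subst hP
    exact (convexHull_extremePoints_convexHull hV).symm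
  have hXfin : (P.extremePoints ℝ).Finite := hV.subset (hP ▸ extremePoints_convexHull_subset)
  set X := P.extremePoints ℝ
  have hub : a ⬝ᵥ u < b := (hsep u huX).1 huG
  have hlevel : ∀ v ∈ X, a ⬝ᵥ v = a ⬝ᵥ u ∨ b < a ⬝ᵥ v := fun v hv =>
    (em (v ∈ G)).imp (fun hvG => hpar v hvG u huG) (hsep v hv).2
  obtain ⟨v₀, hv₀X, hv₀G⟩ := exists_mem_notMem_of_ne_convexHull
    (hG.convex (hPX ▸ convex_convexHull ℝ X)) (hPX ▸ hG.subset) (hPX ▸ hGP)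
  have hu : u ∈ (convexHull ℝ X).extremePoints ℝ := by rwa [← hPX]
  subst hQ
  rw [hPX]
  ext z
  constructor
  · intro hz
    obtain ⟨w, hwX, haw, hexp, hzw⟩ := exists_edge_mem_normalCone_truncation hXfin b hu
      (fun v hv => (hlevel v hv).elim ge_of_eq fun h => (hub.trans h).le)
      ⟨v₀, hv₀X, hub.trans ((hsep v₀ hv₀X).2 hv₀G)⟩ hz
    exact ⟨w, hwX, fun hwG => haw.ne' (hpar w hwG u huG), hexp, hzw⟩
  · rintro ⟨w, hwX, hwG, -, hzw⟩
    exact mem_normalCone_of_mem_normalCone_truncation hwX hub ((hsep w hwX).2 hwG)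
      (fun v hv => (hlevel v hv).imp_right le_of_lt) hzw

/-- for a parallel truncation `Q = P ∩ {x : ⟨a,x⟩ ≥ b}` of a polytope
`P` in a proper nonempty exposed face `G` (with `⟨a,·⟩` constant on `G`), the normal
cone of `P` at any extreme point `u ∈ G` is the union, over the extreme points `w ∉ G`
adjacent to `u`, of the normal cones of `Q` at the intersection points of the edges
`[u,w]` with the truncating hyperplane. -/
theorem stmt_11 (d : ℕ) (V : Set (Fin d → ℝ)) (hV : V.Finite) (hVne : V.Nonempty)
    (P : Set (Fin d → ℝ)) (hP : P = convexHull ℝ V)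
    (G : Set (Fin d → ℝ)) (hG : IsExposed ℝ P G) (hGne : G.Nonempty) (hGP : G ≠ P)
    (a : Fin d → ℝ) (b : ℝ)
    (hsep : ∀ v ∈ P.extremePoints ℝ,
      (v ∈ G → dotp a v < b) ∧ (v ∉ G → b < dotp a v))
    (hpar : ∀ x ∈ G, ∀ y ∈ G, dotp a x = dotp a y)
    (Q : Set (Fin d → ℝ)) (hQ : Q = P ∩ {x | b ≤ dotp a x}) :
    ∀ u ∈ P.extremePoints ℝ, u ∈ G →
      normalCone P u =
        {z | ∃ w, w ∈ P.extremePoints ℝ ∧ w ∉ G ∧ IsExposed ℝ P (segment ℝ u w) ∧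
          z ∈ normalCone Q
            (u + ((b - dotp a u) / (dotp a w - dotp a u)) • (w - u))} :=
  stmt_11_general d V hV P hP G hG hGP a b hsep hpar Q hQ
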